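/- Let (φ_i)_{i∈I} be a finite frame for ℝ^n and let λ > 0. Then the saturated measurement operator S_λ is one-to-one on the closed unit ball B of ℝ^n if and only if S_λ is bi-Lipschitz on B, i.e., there exist constants 0 < c ≤ C such that c‖x−y‖ ≤ ‖S_λ(x) − S_λ(y)‖ ≤ C‖x−y‖ for all x, y ∈ B. In particular, saturation recovery is stable at the critical saturation level. -/

import Mathlib

/-!
The upper bound holds because saturation is 1-Lipschitz. For the lower bound, suppose pairs
`x_k ≠ y_k` in the ball have `‖S x_k - S y_k‖ ≤ ‖x_k - y_k‖ / k`. By compactness `x_k → a`,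
`y_k → b` and the unit directions of `x_k - y_k` tend to some `w`; continuity and injectivity force
`a = b`, so `x_k - y_k → 0`. In every coordinate `i` with `⟪w, φ i⟫ ≠ 0` the measurement changes by
much less than its argument `⟪x_k - y_k, φ i⟫`, which for a small step is only possible when the
midpoint `m_k` of `x_k` and `y_k` is strictly saturated: `λ < |⟪m_k, φ i⟫|`. Then `S` is constant
on `m_k + t w` for small `t`, and `m_k` lies in the open ball by strict convexity, contradicting
injectivity.
-/

open RealInnerProductSpace Filter Topology Metric

def saturate (lam t : ℝ) : ℝ := max (min t lam) (-lam)

lemma sign_mul_min_abs_eq_saturate {lam : ℝ} (hlam : 0 ≤ lam) (t : ℝ) :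
    Real.sign t * min |t| lam = saturate lam t := by
  unfold saturate
  rcases lt_trichotomy t 0 with ht | rfl | ht
  · rw [Real.sign_of_neg ht, abs_of_neg ht, neg_one_mul, ← max_neg_neg, neg_neg,
      min_eq_left (by linarith : t ≤ lam), max_comm]
  · simp [hlam]
  · rw [Real.sign_of_pos ht, abs_of_pos ht, one_mul, max_eq_left]
    exact (neg_nonpos.2 hlam).trans (le_min ht.le hlam)

lemma lipschitzWith_saturate (lam : ℝ) : LipschitzWith 1 (saturate lam) :=
  (LipschitzWith.id.min_const lam).max_const (-lam)

lemma saturate_eq_of_abs_sub_lt {lam s t : ℝ} (h : |s - t| < |t| - lam) :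
    saturate lam s = saturate lam t := by
  unfold saturate
  rw [abs_sub_lt_iff] at h
  rcases abs_cases t with ⟨ht, -⟩ | ⟨ht, -⟩ <;> rw [ht] at h
  · rw [min_eq_right (by linarith), min_eq_right (by linarith)]
  · rw [max_eq_right ((min_le_left _ _).trans (by linarith)),
      max_eq_right ((min_le_left _ _).trans (by linarith))]

lemma abs_sub_le_two_mul_abs_saturate_sub {lam a b : ℝ} (hab : |a - b| ≤ 2 * lam)
    (hm : |(a + b) / 2| ≤ lam) : |a - b| ≤ 2 * |saturate lam a - saturate lam b| := by
  -- If the midpoint is, say, nonnegative, the smaller point lies at most `lam` below it, so it is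
  -- unsaturated, while the larger one saturates no lower than the midpoint.
  unfold saturate
  grind

section SaturatedMeasurement

variable {E ι : Type*} [NormedAddCommGroup E] [InnerProductSpace ℝ E]

def saturatedMeasurement (lam : ℝ) (φ : ι → E) (x : E) : EuclideanSpace ℝ ι :=
  WithLp.toLp 2 fun i => saturate lam ⟪x, φ i⟫

@[simp]
lemma saturatedMeasurement_apply (lam : ℝ) (φ : ι → E) (x : E) (i : ι) :
    saturatedMeasurement lam φ x i = saturate lam ⟪x, φ i⟫ := rfl

lemma continuous_saturatedMeasurement (lam : ℝ) (φ : ι → E) :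
    Continuous (saturatedMeasurement lam φ) :=
  (PiLp.continuous_toLp 2 _).comp <| continuous_pi fun _ =>
    (lipschitzWith_saturate lam).continuous.comp (continuous_id.inner continuous_const)

lemma eventually_saturatedMeasurement_add_smul_eq [Finite ι] {lam : ℝ} {φ : ι → E} {M u : E}
    (h : ∀ i, ⟪u, φ i⟫ = 0 ∨ lam < |⟪M, φ i⟫|) :
    ∀ᶠ t in 𝓝 (0 : ℝ), saturatedMeasurement lam φ (M + t • u) = saturatedMeasurement lam φ M := by
  have hcoord : ∀ i, ∀ᶠ t in 𝓝 (0 : ℝ), |t * ⟪u, φ i⟫| < |⟪M, φ i⟫| - lam ∨ ⟪u, φ i⟫ = 0 := by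
    intro i
    rcases h i with hu | hM
    · exact .of_forall fun _ => Or.inr hu
    · have : Tendsto (fun t : ℝ => |t * ⟪u, φ i⟫|) (𝓝 0) (𝓝 0) := by
        simpa using (continuous_mul_const ⟪u, φ i⟫).abs.tendsto 0
      exact (this.eventually_lt_const (sub_pos.2 hM)).mono fun _ => Or.inl
  filter_upwards [eventually_all.2 hcoord] with t ht
  ext i
  simp only [saturatedMeasurement_apply, inner_add_left, real_inner_smul_left]
  rcases ht i with hlt | hu
  · exact saturate_eq_of_abs_sub_lt (by rwa [add_sub_cancel_left])
  · rw [hu, mul_zero, add_zero]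

lemma not_injOn_closedBall_saturatedMeasurement [Finite ι] {lam : ℝ} {φ : ι → E} {M u : E}
    (hM : ‖M‖ < 1) (hu : u ≠ 0) (h : ∀ i, ⟪u, φ i⟫ = 0 ∨ lam < |⟪M, φ i⟫|) :
    ¬ Set.InjOn (saturatedMeasurement lam φ) (closedBall 0 1) := by
  intro hinj
  have hball : ∀ᶠ t in 𝓝 (0 : ℝ), M + t • u ∈ ball 0 1 := by
    refine (Continuous.tendsto (by fun_prop) 0).eventually (isOpen_ball.mem_nhds ?_)
    simpa using hM
  obtain ⟨t, ⟨hSt, htB⟩, ht⟩ :=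
    ((((eventually_saturatedMeasurement_add_smul_eq h).and hball).filter_mono
      (nhdsWithin_le_nhds (s := {0}ᶜ))).and self_mem_nhdsWithin).exists
  have := hinj (ball_subset_closedBall htB) (mem_closedBall_zero_iff.2 hM.le) hSt
  exact smul_ne_zero ht hu (by simpa using this)

variable [Fintype ι]

lemma norm_saturatedMeasurement_sub_le (lam : ℝ) (φ : ι → E) (x y : E) :
    ‖saturatedMeasurement lam φ x - saturatedMeasurement lam φ y‖ ≤
      √(∑ i, ‖φ i‖ ^ 2) * ‖x - y‖ := by
  rw [EuclideanSpace.norm_eq, ← Real.sqrt_sq (norm_nonneg (x - y)),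
    ← Real.sqrt_mul (Finset.sum_nonneg fun i _ => sq_nonneg _), Finset.sum_mul]
  refine Real.sqrt_le_sqrt (Finset.sum_le_sum fun i _ => ?_)
  calc ‖saturate lam ⟪x, φ i⟫ - saturate lam ⟪y, φ i⟫‖ ^ 2
      ≤ |⟪x - y, φ i⟫| ^ 2 := by
        gcongr
        simpa [inner_sub_left, Real.dist_eq] using (lipschitzWith_saturate lam).dist_le_mul _ _
    _ ≤ (‖φ i‖ * ‖x - y‖) ^ 2 := by
        gcongr
        rw [mul_comm]
        exact abs_real_inner_le_norm _ _
    _ = ‖φ i‖ ^ 2 * ‖x - y‖ ^ 2 := mul_pow _ _ _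

lemma eventually_lt_abs_inner_midpoint {lam : ℝ} (hlam : 0 < lam) {φ : ι → E}
    {x y : ℕ → E} {ε : ℕ → ℝ} {w : E} {i : ι} (hne : ∀ k, x k ≠ y k)
    (hS : ∀ k, ‖saturatedMeasurement lam φ (x k) - saturatedMeasurement lam φ (y k)‖ ≤
      ε k * ‖x k - y k‖)
    (hε : Tendsto ε atTop (𝓝 0)) (hxy : Tendsto (fun k => x k - y k) atTop (𝓝 0))
    (hw : Tendsto (fun k => ‖x k - y k‖⁻¹ • (x k - y k)) atTop (𝓝 w)) (hi : ⟪w, φ i⟫ ≠ 0) :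
    ∀ᶠ k in atTop, lam < |⟪(2⁻¹ : ℝ) • x k + (2⁻¹ : ℝ) • y k, φ i⟫| := by
  have hsmall : ∀ᶠ k in atTop, |⟪x k - y k, φ i⟫| ≤ 2 * lam := by
    have : Tendsto (fun k => |⟪x k - y k, φ i⟫|) atTop (𝓝 0) := by
      simpa using (hxy.inner (𝕜 := ℝ) (tendsto_const_nhds (x := φ i))).abs
    exact (this.eventually_lt_const (by positivity)).mono fun _ => le_of_lt
  have hdir : ∀ᶠ k in atTop, 2 * ε k < |⟪‖x k - y k‖⁻¹ • (x k - y k), φ i⟫| :=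
    (hε.const_mul 2).eventually_lt (hw.inner (𝕜 := ℝ) (tendsto_const_nhds (x := φ i))).abs
      (by simpa using hi)
  filter_upwards [hsmall, hdir] with k hk hk'
  by_contra! hmid
  have hd : 0 < ‖x k - y k‖ := norm_pos_iff.2 (sub_ne_zero.2 (hne k))
  have hcoord : |saturate lam ⟪x k, φ i⟫ - saturate lam ⟪y k, φ i⟫| ≤
      ‖saturatedMeasurement lam φ (x k) - saturatedMeasurement lam φ (y k)‖ :=
    PiLp.norm_apply_le (saturatedMeasurement lam φ (x k) - saturatedMeasurement lam φ (y k)) i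
  have hab : |⟪x k, φ i⟫ - ⟪y k, φ i⟫| =
      ‖x k - y k‖ * |⟪‖x k - y k‖⁻¹ • (x k - y k), φ i⟫| := by
    rw [real_inner_smul_left, abs_mul, abs_inv, abs_norm, mul_inv_cancel_left₀ hd.ne',
      inner_sub_left]
  rw [inner_sub_left] at hk
  have hsplit := abs_sub_le_two_mul_abs_saturate_sub hk
    (by rwa [inner_add_left, real_inner_smul_left, real_inner_smul_left, ← mul_add,
      inv_mul_eq_div] at hmid)
  have := mul_lt_mul_of_pos_left hk' hd
  linarith [hS k]

theorem exists_pos_mul_le_norm_saturatedMeasurement_sub [FiniteDimensional ℝ E] {lam : ℝ}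
    (hlam : 0 < lam) {φ : ι → E}
    (hinj : Set.InjOn (saturatedMeasurement lam φ) (closedBall 0 1)) :
    ∃ c > 0, ∀ x ∈ closedBall (0 : E) 1, ∀ y ∈ closedBall (0 : E) 1,
      c * ‖x - y‖ ≤ ‖saturatedMeasurement lam φ x - saturatedMeasurement lam φ y‖ := by
  set S := saturatedMeasurement lam φ
  by_contra! h
  choose x hx y hy hlt using fun k : ℕ => h (1 / (k + 1)) Nat.one_div_pos_of_nat
  have hne : ∀ k, x k ≠ y k := fun k hk => (hlt k).not_ge (by simp [hk])
  set u := fun k => ‖x k - y k‖⁻¹ • (x k - y k)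
  have hu : ∀ k, u k ∈ sphere (0 : E) 1 := fun k => by
    simp [u, norm_smul, sub_ne_zero.2 (hne k)]
  obtain ⟨⟨a, b, w⟩, ⟨ha, hb, hw⟩, ψ, hψ, hlim⟩ :=
    ((isCompact_closedBall (0 : E) 1).prod ((isCompact_closedBall (0 : E) 1).prod
      (isCompact_sphere (0 : E) 1))).tendsto_subseq (x := fun k => (x k, y k, u k))
      fun k => ⟨hx k, hy k, hu k⟩
  have hxa : Tendsto (x ∘ ψ) atTop (𝓝 a) := (continuous_fst.tendsto _).comp hlim
  have hyb : Tendsto (y ∘ ψ) atTop (𝓝 b) :=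
    ((continuous_fst.comp continuous_snd).tendsto _).comp hlim
  have huw : Tendsto (u ∘ ψ) atTop (𝓝 w) :=
    ((continuous_snd.comp continuous_snd).tendsto _).comp hlim
  have hε : Tendsto (fun k => 1 / ((ψ k : ℝ) + 1)) atTop (𝓝 0) :=
    tendsto_one_div_add_atTop_nhds_zero_nat.comp hψ.tendsto_atTop
  have hS0 : Tendsto (fun k => S (x (ψ k)) - S (y (ψ k))) atTop (𝓝 0) := by
    refine squeeze_zero_norm (fun k => (hlt (ψ k)).le.trans
      (mul_le_mul_of_nonneg_left ?_ (by positivity))) (by simpa using hε.mul_const 2)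
    exact (norm_sub_le_of_le (mem_closedBall_zero_iff.1 (hx _))
      (mem_closedBall_zero_iff.1 (hy _))).trans_eq one_add_one_eq_two
  obtain rfl : a = b := hinj ha hb <| sub_eq_zero.1 <| tendsto_nhds_unique
    ((((continuous_saturatedMeasurement lam φ).tendsto a).comp hxa).sub
      (((continuous_saturatedMeasurement lam φ).tendsto b).comp hyb)) hS0
  have hxy : Tendsto (fun k => x (ψ k) - y (ψ k)) atTop (𝓝 0) := by
    simpa using hxa.sub hyb
  have hsat : ∀ᶠ k in atTop, ∀ i,
      ⟪w, φ i⟫ = 0 ∨ lam < |⟪(2⁻¹ : ℝ) • x (ψ k) + (2⁻¹ : ℝ) • y (ψ k), φ i⟫| := by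
    refine eventually_all.2 fun i => ?_
    by_cases hi : ⟪w, φ i⟫ = 0
    · exact .of_forall fun _ => Or.inl hi
    · exact (eventually_lt_abs_inner_midpoint hlam (fun k => hne (ψ k))
        (fun k => (hlt (ψ k)).le) hε hxy huw hi).mono fun _ => Or.inr
  obtain ⟨k, hk⟩ := hsat.exists
  refine not_injOn_closedBall_saturatedMeasurement ?_ (fun hw0 => by simp [hw0] at hw) hk hinj
  exact norm_combo_lt_of_ne (mem_closedBall_zero_iff.1 (hx _)) (mem_closedBall_zero_iff.1 (hy _))
    (hne _) (by norm_num) (by norm_num) (by norm_num)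

end SaturatedMeasurement

theorem saturation_injective_iff_biLipschitz_general
    {n : ℕ} {ι : Type*} [Fintype ι]
    (φ : ι → EuclideanSpace ℝ (Fin n))
    (lam : ℝ) (hlam : 0 < lam)
    (S : EuclideanSpace ℝ (Fin n) → EuclideanSpace ℝ ι)
    (hS : ∀ x, S x = fun i : ι => Real.sign ⟪x, φ i⟫ * min |⟪x, φ i⟫| lam) :
    Set.InjOn S (Metric.closedBall (0 : EuclideanSpace ℝ (Fin n)) 1) ↔
      ∃ c C : ℝ, 0 < c ∧ c ≤ C ∧
        ∀ x ∈ Metric.closedBall (0 : EuclideanSpace ℝ (Fin n)) 1,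
          ∀ y ∈ Metric.closedBall (0 : EuclideanSpace ℝ (Fin n)) 1,
            c * ‖x - y‖ ≤ ‖S x - S y‖ ∧ ‖S x - S y‖ ≤ C * ‖x - y‖ := by
  obtain rfl : S = saturatedMeasurement lam φ :=
    funext fun x => PiLp.ext fun i => by simp [hS, sign_mul_min_abs_eq_saturate hlam.le]
  constructor
  · intro hinj
    obtain ⟨c, hc, hlower⟩ := exists_pos_mul_le_norm_saturatedMeasurement_sub hlam hinj
    refine ⟨c, max c √(∑ i, ‖φ i‖ ^ 2), hc, le_max_left _ _, fun x hx y hy =>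
      ⟨hlower x hx y hy, (norm_saturatedMeasurement_sub_le lam φ x y).trans ?_⟩⟩
    gcongr
    exact le_max_right _ _
  · rintro ⟨c, C, hc, -, hbound⟩ x hx y hy hxy
    have hle := (hbound x hx y hy).1
    rw [hxy, sub_self, norm_zero] at hle
    exact sub_eq_zero.1 (norm_le_zero_iff.1 (nonpos_of_mul_nonpos_right hle hc))

/-- For a finite frame `(φ_i)` for `ℝ^n` and `λ > 0`, the saturated
measurement operator `S_λ` is one-to-one on the closed unit ball if and only if it is
bi-Lipschitz on the ball. In particular, saturation recovery is stable at the
critical saturation level. -/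
theorem saturation_injective_iff_biLipschitz
    {n : ℕ} {ι : Type*} [Fintype ι]
    (φ : ι → EuclideanSpace ℝ (Fin n))
    (hframe : Submodule.span ℝ (Set.range φ) = ⊤)
    (lam : ℝ) (hlam : 0 < lam)
    (S : EuclideanSpace ℝ (Fin n) → EuclideanSpace ℝ ι)
    (hS : ∀ x, S x = fun i : ι => Real.sign ⟪x, φ i⟫ * min |⟪x, φ i⟫| lam) :
    Set.InjOn S (Metric.closedBall (0 : EuclideanSpace ℝ (Fin n)) 1) ↔
      ∃ c C : ℝ, 0 < c ∧ c ≤ C ∧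
        ∀ x ∈ Metric.closedBall (0 : EuclideanSpace ℝ (Fin n)) 1,
          ∀ y ∈ Metric.closedBall (0 : EuclideanSpace ℝ (Fin n)) 1,
            c * ‖x - y‖ ≤ ‖S x - S y‖ ∧ ‖S x - S y‖ ≤ C * ‖x - y‖ :=
  saturation_injective_iff_biLipschitz_general φ lam hlam S hS
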